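/- arXiv:1204.3909 — 7 statements merged into one kernel-verified Lean document; each statement's English description precedes it below -/
import Mathlib

section
/- Let φ : ℝ → ℝ be a C², 2π-periodic solution of φ̈(τ) + |φ(τ)|^{1/2}φ(τ) = 0 satisfying φ(τ+π) = −φ(τ) for all τ. Then for every ε ≥ 0 the pair u∗(τ) = φ(τ), w∗(τ) = 0 solves the differential advance-delay system with q = π/2: ü∗(τ) = V'(εw∗(τ) − u∗(τ)) − V'(u∗(τ) − εw∗(τ−π)) and ẅ∗(τ) = εV'(u∗(τ+π) − εw∗(τ)) − εV'(εw∗(τ) − u∗(τ)) for all τ ∈ ℝ. -/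
open Real

/-- Hertzian force: `V'(x) = -(max(-x,0))^(3/2)`. -/
noncomputable def V' (x : ℝ) : ℝ := -(max (-x) 0) ^ ((3:ℝ)/2)

lemma V'_key (a : ℝ) : V' (-a) - V' a = -(|a| ^ ((1:ℝ)/2) * a) := by
  unfold V'
  rw [neg_neg]
  rcases lt_trichotomy a 0 with h | rfl | h
  · rw [max_eq_right h.le, max_eq_left (by linarith), abs_of_nonpos h.le,
      show (3:ℝ)/2 = 1/2 + 1 by ring,
      Real.rpow_add_one (by linarith : (-a) ≠ 0),
      Real.zero_rpow (by norm_num)]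
    ring
  · simp
  · rw [max_eq_left h.le, max_eq_right (by linarith), abs_of_nonneg h.le,
      show (3:ℝ)/2 = 1/2 + 1 by ring,
      Real.rpow_add_one (ne_of_gt h),
      Real.zero_rpow (by norm_num)]
    ring

/-- The exact travelling-wave solution (exact-1) for `q = π/2`:
`u∗ = φ`, `w∗ = 0` solves the advance-delay system for every `ε ≥ 0`. -/
theorem exact_solution_q_pi_div_two
    (φ : ℝ → ℝ) (hφ : ContDiff ℝ 2 φ)
    (hφper : Function.Periodic φ (2 * π))
    (hφode : ∀ τ, deriv (deriv φ) τ + |φ τ| ^ ((1:ℝ)/2) * φ τ = 0)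
    (hanti : ∀ τ, φ (τ + π) = -φ τ)
    (ε : ℝ) (hε : 0 ≤ ε) :
    ∀ τ : ℝ,
      deriv (deriv φ) τ =
        V' (ε * (fun _ : ℝ => (0:ℝ)) τ - φ τ)
          - V' (φ τ - ε * (fun _ : ℝ => (0:ℝ)) (τ - π)) ∧
      deriv (deriv (fun _ : ℝ => (0:ℝ))) τ =
        ε * V' (φ (τ + π) - ε * (fun _ : ℝ => (0:ℝ)) τ)
          - ε * V' (ε * (fun _ : ℝ => (0:ℝ)) τ - φ τ) := by
  intro τ
  constructor
  · simp only [mul_zero, zero_sub, sub_zero]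
    have := hφode τ
    rw [V'_key (φ τ)]
    linarith
  · simp only [mul_zero, sub_zero, zero_sub, hanti τ]
    simp [deriv_const]
end

section
/- Let φ : ℝ → ℝ be a C², 2π-periodic solution of φ̈(τ) + |φ(τ)|^{1/2}φ(τ) = 0. Then for every ε ≥ 0 and for q = 0 as well as for q = π, the pair u∗(τ) = φ(τ)/(1+ε²)³, w∗(τ) = −εφ(τ)/(1+ε²)³ solves the differential advance-delay system ü∗(τ) = V'(εw∗(τ) − u∗(τ)) − V'(u∗(τ) − εw∗(τ−2q)) and ẅ∗(τ) = εV'(u∗(τ+2q) − εw∗(τ)) − εV'(εw∗(τ) − u∗(τ)) for all τ ∈ ℝ. -/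
open Real

/-!
Put `b = 1 + ε²`. For `q ∈ {0, π}` the shifts `τ ± 2q` are multiples of the period, so both
interaction arguments are `∓ (1 + ε²) φ τ / b³ = ∓ φ τ / b²`. The net force
`V'(-x) - V'(x) = -|x|^{1/2} x` is homogeneous of degree `3/2`, hence equals
`-|φ|^{1/2} φ / b³ = φ'' / b³` on the `u`-site, and `-ε` times that on the `w`-site.
-/

theorem deriv_deriv_div_const {𝕜 : Type*} [NontriviallyNormedField 𝕜] (f : 𝕜 → 𝕜) (d : 𝕜) :
    deriv (deriv fun s => f s / d) = fun s => deriv (deriv f) s / d := by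
  simp only [div_eq_mul_inv, deriv_mul_const_field']

theorem deriv_deriv_const_mul_div_const {𝕜 : Type*} [NontriviallyNormedField 𝕜] (f : 𝕜 → 𝕜)
    (c d : 𝕜) : deriv (deriv fun s => c * f s / d) = fun s => c * deriv (deriv f) s / d := by
  simp only [div_eq_mul_inv, deriv_mul_const_field', deriv_const_mul_field']

theorem V'_neg_sub_V' (x : ℝ) : V' (-x) - V' x = -(|x| ^ ((1:ℝ)/2) * x) := by
  have h32 : (3:ℝ) / 2 = 1 / 2 + 1 := by norm_num
  unfold V'
  rcases le_total 0 x with hx | hx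
  · rw [neg_neg, max_eq_left hx, max_eq_right (neg_nonpos.mpr hx), zero_rpow (by norm_num),
      abs_of_nonneg hx, h32, rpow_add_one' hx (by norm_num)]
    ring
  · rw [neg_neg, max_eq_right hx, max_eq_left (neg_nonneg.mpr hx), zero_rpow (by norm_num),
      abs_of_nonpos hx, h32, rpow_add_one' (neg_nonneg.mpr hx) (by norm_num)]
    ring

theorem abs_div_sq_rpow_half_mul {b : ℝ} (hb : 0 ≤ b) (x : ℝ) :
    |x / b ^ 2| ^ ((1:ℝ)/2) * (x / b ^ 2) = |x| ^ ((1:ℝ)/2) * x / b ^ 3 := by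
  rw [abs_div, abs_of_nonneg (by positivity : (0:ℝ) ≤ b ^ 2),
    div_rpow (abs_nonneg x) (by positivity), ← sqrt_eq_rpow (b ^ 2), sqrt_sq hb, div_mul_div_comm]
  ring

theorem V'_neg_sub_V'_div_sq {b : ℝ} (hb : 0 ≤ b) (x : ℝ) :
    V' (-(x / b ^ 2)) - V' (x / b ^ 2) = -(|x| ^ ((1:ℝ)/2) * x) / b ^ 3 := by
  rw [V'_neg_sub_V', abs_div_sq_rpow_half_mul hb, neg_div]

theorem Function.Periodic.apply_add_two_mul_eq {f : ℝ → ℝ} {c q : ℝ}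
    (hf : Function.Periodic f (2 * c)) (hq : q = 0 ∨ q = c) (τ : ℝ) :
    f (τ + 2 * q) = f τ ∧ f (τ - 2 * q) = f τ := by
  rcases hq with rfl | rfl
  · simp
  · exact ⟨hf τ, hf.sub_eq τ⟩

theorem exact_solution_q_zero_and_pi_general
    (φ : ℝ → ℝ)
    (hφper : Function.Periodic φ (2 * π))
    (hφode : ∀ τ, deriv (deriv φ) τ + |φ τ| ^ ((1:ℝ)/2) * φ τ = 0)
    (ε : ℝ) (q : ℝ) (hq : q = 0 ∨ q = π) :
    ∀ τ : ℝ,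
      deriv (deriv (fun s : ℝ => φ s / (1 + ε ^ 2) ^ 3)) τ =
        V' (ε * (-ε * φ τ / (1 + ε ^ 2) ^ 3) - φ τ / (1 + ε ^ 2) ^ 3)
          - V' (φ τ / (1 + ε ^ 2) ^ 3 - ε * (-ε * φ (τ - 2 * q) / (1 + ε ^ 2) ^ 3)) ∧
      deriv (deriv (fun s : ℝ => -ε * φ s / (1 + ε ^ 2) ^ 3)) τ =
        ε * V' (φ (τ + 2 * q) / (1 + ε ^ 2) ^ 3 - ε * (-ε * φ τ / (1 + ε ^ 2) ^ 3))
          - ε * V' (ε * (-ε * φ τ / (1 + ε ^ 2) ^ 3) - φ τ / (1 + ε ^ 2) ^ 3) := by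
  intro τ
  obtain ⟨hfwd, hback⟩ := hφper.apply_add_two_mul_eq hq τ
  rw [hfwd, hback, deriv_deriv_div_const, deriv_deriv_const_mul_div_const]
  set b := 1 + ε ^ 2
  have hb : 0 < b := by positivity
  have hin : ε * (-ε * φ τ / b ^ 3) - φ τ / b ^ 3 = -(φ τ / b ^ 2) := by
    field_simp
    ring
  have hout : φ τ / b ^ 3 - ε * (-ε * φ τ / b ^ 3) = φ τ / b ^ 2 := by
    field_simp
    ring
  have hforce := V'_neg_sub_V'_div_sq hb.le (φ τ)
  rw [hin, hout]
  constructor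
  · linear_combination hφode τ / b ^ 3 - hforce
  · linear_combination -ε * hφode τ / b ^ 3 + ε * hforce

/-- The exact travelling-wave solution (exact-2) for `q = 0` and `q = π`:
`u∗ = φ/(1+ε²)³`, `w∗ = -εφ/(1+ε²)³` solves the advance-delay system
for every `ε ≥ 0`. -/
theorem exact_solution_q_zero_and_pi
    (φ : ℝ → ℝ) (hφ : ContDiff ℝ 2 φ)
    (hφper : Function.Periodic φ (2 * π))
    (hφode : ∀ τ, deriv (deriv φ) τ + |φ τ| ^ ((1:ℝ)/2) * φ τ = 0)
    (ε : ℝ) (hε : 0 ≤ ε) (q : ℝ) (hq : q = 0 ∨ q = π) :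
    ∀ τ : ℝ,
      deriv (deriv (fun s : ℝ => φ s / (1 + ε ^ 2) ^ 3)) τ =
        V' (ε * (-ε * φ τ / (1 + ε ^ 2) ^ 3) - φ τ / (1 + ε ^ 2) ^ 3)
          - V' (φ τ / (1 + ε ^ 2) ^ 3 - ε * (-ε * φ (τ - 2 * q) / (1 + ε ^ 2) ^ 3)) ∧
      deriv (deriv (fun s : ℝ => -ε * φ s / (1 + ε ^ 2) ^ 3)) τ =
        ε * V' (φ (τ + 2 * q) / (1 + ε ^ 2) ^ 3 - ε * (-ε * φ τ / (1 + ε ^ 2) ^ 3))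
          - ε * V' (ε * (-ε * φ τ / (1 + ε ^ 2) ^ 3) - φ τ / (1 + ε ^ 2) ^ 3) :=
  exact_solution_q_zero_and_pi_general φ hφper hφode ε q hq
end

section
/- Fix q ∈ ℝ. Let φ : ℝ → ℝ be a continuous, odd, 2π-periodic function, and let w : ℝ → ℝ be a C², 2π-periodic function with zero mean (∫₀^{2π} w(τ)dτ = 0) satisfying ẅ(τ) = V'(φ(τ+2q)) − V'(−φ(τ)) for all τ ∈ ℝ. Then w(τ) = −w(−τ−2q) for all τ ∈ ℝ. -/
/-!
Set `g τ = w τ + w (c - τ)` with `c = -2q`. Since `φ` is odd, the right-hand side of the equation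
for `ẅ` changes sign under `τ ↦ c - τ`, so `g̈ = 0` and `g` is affine. Being periodic, `g` is
constant; and since the reflection preserves the mean of a periodic function, the mean of `g`
is twice that of `w`, i.e. zero.
-/

open Real

theorem eq_add_mul_of_hasDerivAt_of_hasDerivAt_zero {f f' : ℝ → ℝ}
    (hf : ∀ x, HasDerivAt f (f' x) x) (hf' : ∀ x, HasDerivAt f' 0 x) (x : ℝ) :
    f x = f 0 + f' 0 * x := by
  have hconst : ∀ y, f' y = f' 0 := fun y =>
    is_const_of_deriv_eq_zero (fun z => (hf' z).differentiableAt) (fun z => (hf' z).deriv) y 0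
  have hlin : ∀ y, HasDerivAt (fun z => f z - f' 0 * z) 0 y := fun y => by
    simpa [hconst y] using (hf y).fun_sub ((hasDerivAt_id y).const_mul (f' 0))
  have := is_const_of_deriv_eq_zero (fun y => (hlin y).differentiableAt) (fun y => (hlin y).deriv) x 0
  simp only [mul_zero, sub_zero] at this
  linarith

namespace Function.Periodic

variable {f : ℝ → ℝ} {T : ℝ}

theorem eq_zero_of_hasDerivAt_of_integral_eq_zero {f' : ℝ → ℝ} (hf : Periodic f T) (hT : T ≠ 0)
    (hint : ∫ x in (0:ℝ)..T, f x = 0) (hfd : ∀ x, HasDerivAt f (f' x) x)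
    (hfd' : ∀ x, HasDerivAt f' 0 x) (x : ℝ) : f x = 0 := by
  have haff := eq_add_mul_of_hasDerivAt_of_hasDerivAt_zero hfd hfd'
  have hslope : f' 0 = 0 := by
    have hfT : f T = f 0 := by simpa using hf 0
    have hslopeT : f' 0 * T = 0 := by linarith [haff T]
    exact (mul_eq_zero.mp hslopeT).resolve_right hT
  have hconst : ∀ y, f y = f 0 := fun y => by rw [haff y, hslope, zero_mul, add_zero]
  have hf0 : T * f 0 = 0 := by
    simpa [intervalIntegral.integral_congr (fun y _ => hconst y)] using hint
  rw [hconst x]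
  exact (mul_eq_zero.mp hf0).resolve_left hT

theorem intervalIntegral_comp_const_sub (hf : Periodic f T) (c : ℝ) :
    ∫ x in (0:ℝ)..T, f (c - x) = ∫ x in (0:ℝ)..T, f x := by
  rw [intervalIntegral.integral_comp_sub_left, sub_zero]
  simpa using hf.intervalIntegral_add_eq (c - T) 0

theorem eq_neg_apply_const_sub (hf : Periodic f T) (hT : T ≠ 0)
    (hint : ∫ x in (0:ℝ)..T, f x = 0) (hfd : Differentiable ℝ f)
    (hfd' : Differentiable ℝ (deriv f)) {c : ℝ}
    (hrefl : ∀ x, deriv (deriv f) x + deriv (deriv f) (c - x) = 0) (x : ℝ) :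
    f x = -f (c - x) := by
  have hg : ∀ y, HasDerivAt (fun z => f z + f (c - z)) (deriv f y - deriv f (c - y)) y :=
    fun y => by
      simpa [sub_eq_add_neg] using
        (hfd y).hasDerivAt.fun_add (((hfd (c - y)).hasDerivAt).comp_const_sub c y)
  have hg' : ∀ y, HasDerivAt (fun z => deriv f z - deriv f (c - z)) 0 y := fun y => by
    simpa [hrefl y] using
      (hfd' y).hasDerivAt.fun_sub (((hfd' (c - y)).hasDerivAt).comp_const_sub c y)
  have hgint : ∫ z in (0:ℝ)..T, (f z + f (c - z)) = 0 := by
    rw [intervalIntegral.integral_add (g := fun z => f (c - z))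
      (hfd.continuous.intervalIntegrable _ _)
      ((hfd.continuous.comp (continuous_sub_left c)).intervalIntegrable _ _),
      hf.intervalIntegral_comp_const_sub, hint, add_zero]
  have := (hf.add (hf.const_sub c)).eq_zero_of_hasDerivAt_of_integral_eq_zero hT hgint hg hg' x
  rw [Pi.add_apply] at this
  linarith

end Function.Periodic

theorem antisymmetry_of_first_order_correction_general
    (q : ℝ) (φ : ℝ → ℝ)
    (hφodd : ∀ τ, φ (-τ) = -φ τ)
    (w : ℝ → ℝ) (hw : ContDiff ℝ 2 w)
    (hwper : Function.Periodic w (2 * π))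
    (hmean : (∫ τ in (0:ℝ)..(2 * π), w τ) = 0)
    (hode : ∀ τ, deriv (deriv w) τ = V' (φ (τ + 2 * q)) - V' (-φ τ)) :
    ∀ τ, w τ = -w (-τ - 2 * q) := by
  have hrefl : ∀ τ, deriv (deriv w) τ + deriv (deriv w) (-2 * q - τ) = 0 := fun τ => by
    rw [hode, hode, show -2 * q - τ + 2 * q = -τ by ring, show -2 * q - τ = -(τ + 2 * q) by ring,
      hφodd, hφodd, neg_neg]
    ring
  intro τ
  rw [show -τ - 2 * q = -2 * q - τ by ring]
  exact hwper.eq_neg_apply_const_sub (by positivity) hmean (hw.differentiable two_ne_zero)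
    hw.differentiable_deriv_two hrefl τ

/-- The antisymmetry reduction (reduction-w) for the first-order correction of the
travelling wave: a zero-mean periodic solution of `ẅ = V'(φ(·+2q)) - V'(-φ)`
satisfies `w(τ) = -w(-τ-2q)`. -/
theorem antisymmetry_of_first_order_correction
    (q : ℝ) (φ : ℝ → ℝ) (hφc : Continuous φ)
    (hφodd : ∀ τ, φ (-τ) = -φ τ)
    (hφper : Function.Periodic φ (2 * π))
    (w : ℝ → ℝ) (hw : ContDiff ℝ 2 w)
    (hwper : Function.Periodic w (2 * π))
    (hmean : (∫ τ in (0:ℝ)..(2 * π), w τ) = 0)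
    (hode : ∀ τ, deriv (deriv w) τ = V' (φ (τ + 2 * q)) - V' (-φ τ)) :
    ∀ τ, w τ = -w (-τ - 2 * q) :=
  antisymmetry_of_first_order_correction_general q φ hφodd w hw hwper hmean hode
end

section
/- Fix q ∈ ℝ and ε ∈ ℝ. Let u : ℝ → ℝ be a continuous, odd, 2π-periodic function and let w : ℝ → ℝ be a continuous 2π-periodic function satisfying w(τ) = −w(−τ−2q) for all τ. Define F(τ) = εV'(u(τ+2q) − εw(τ)) − εV'(εw(τ) − u(τ)). Then F(τ) + F(−τ−2q) = 0 for all τ ∈ ℝ, and consequently ∫₀^{2π} F(τ)dτ = 0. -/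
open Real

/-- Invariance of the symmetry constraint under the vector field
`F_w(τ) = εV'(u(τ+2q) - εw(τ)) - εV'(εw(τ) - u(τ))`:
it satisfies `F(τ) + F(-τ-2q) = 0` and has zero mean. -/
theorem vector_field_Fw_symmetry
    (q ε : ℝ) (u : ℝ → ℝ) (hu : Continuous u)
    (huodd : ∀ τ, u (-τ) = -u τ)
    (huper : Function.Periodic u (2 * π))
    (w : ℝ → ℝ) (hw : Continuous w)
    (hwper : Function.Periodic w (2 * π))
    (hsym : ∀ τ, w τ = -w (-τ - 2 * q)) :
    (∀ τ, (ε * V' (u (τ + 2 * q) - ε * w τ) - ε * V' (ε * w τ - u τ))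
        + (ε * V' (u (-τ - 2 * q + 2 * q) - ε * w (-τ - 2 * q))
            - ε * V' (ε * w (-τ - 2 * q) - u (-τ - 2 * q))) = 0) ∧
    (∫ τ in (0:ℝ)..(2 * π),
        (ε * V' (u (τ + 2 * q) - ε * w τ) - ε * V' (ε * w τ - u τ))) = 0 := by
  set F : ℝ → ℝ := fun τ =>
    ε * V' (u (τ + 2 * q) - ε * w τ) - ε * V' (ε * w τ - u τ) with hF
  have key : ∀ τ, F τ + F (-τ - 2 * q) = 0 := by
    intro τ
    have hw' : w (-τ - 2 * q) = -w τ := by linarith [hsym τ]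
    have hu1 : u (-τ - 2 * q + 2 * q) = -u τ := by
      rw [show -τ - 2 * q + 2 * q = -τ by ring, huodd]
    have hu2 : u (-τ - 2 * q) = -u (τ + 2 * q) := by
      rw [show -τ - 2 * q = -(τ + 2 * q) by ring, huodd]
    simp only [hF, hu1, hu2, hw']
    rw [show -u τ - ε * -w τ = ε * w τ - u τ by ring,
        show ε * -w τ - -u (τ + 2 * q) = u (τ + 2 * q) - ε * w τ by ring]
    ring
  have key' : ∀ τ, (ε * V' (u (τ + 2 * q) - ε * w τ) - ε * V' (ε * w τ - u τ))
        + (ε * V' (u (-τ - 2 * q + 2 * q) - ε * w (-τ - 2 * q))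
            - ε * V' (ε * w (-τ - 2 * q) - u (-τ - 2 * q))) = 0 := key
  refine ⟨key', ?_⟩
  have hFper : Function.Periodic F (2 * π) := by
    intro τ
    simp only [hF]
    rw [show τ + 2 * π + 2 * q = (τ + 2 * q) + 2 * π by ring, huper, hwper, huper]
  have hneg : ∀ τ, F τ = -F (-τ - 2 * q) := fun τ => by linarith [key τ]
  have h1 : (∫ τ in (0:ℝ)..(2 * π), F τ)
      = -∫ τ in (0:ℝ)..(2 * π), F (-2 * q - τ) := by
    rw [← intervalIntegral.integral_neg]
    apply intervalIntegral.integral_congr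
    intro τ _
    rw [hneg τ, show -τ - 2 * q = -2 * q - τ by ring]
  have h2 : (∫ τ in (0:ℝ)..(2 * π), F (-2 * q - τ))
      = ∫ τ in (-2 * q - 2 * π)..(-2 * q - 0), F τ :=
    intervalIntegral.integral_comp_sub_left F (-2 * q)
  have h3 : (∫ τ in (-2 * q - 2 * π)..(-2 * q - 0), F τ)
      = ∫ τ in (0:ℝ)..(2 * π), F τ := by
    have := hFper.intervalIntegral_add_eq (-2 * q - 2 * π) 0
    rw [show -2 * q - 2 * π + 2 * π = -2 * q - 0 by ring, zero_add] at this
    exact this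
  have hI : (∫ τ in (0:ℝ)..(2 * π), F τ) = 0 := by linarith [h1, h2, h3]
  exact hI
end

section
/- Let φ : ℝ → ℝ be a C³, 2π-periodic solution of φ̈ + |φ|^{1/2}φ = 0 that is odd, satisfies φ(τ+π) = −φ(τ), and φ(τ) ≥ 0 on [0,π]. Let g : ℝ → ℝ be the 2π-periodic function defined by g(τ) = (1/π)φ̇(0) − φ̈(τ) for τ ∈ [−π,0) and g(τ) = (1/π)φ̇(0) for τ ∈ [0,π). Then for every q ∈ [0,π/2], ∫₀^{π} φ̈(τ) g(τ+2q) dτ = −(2/π)(φ̇(0))² + I(q), where I(q) := −∫_{π−2q}^{π} φ̈(τ) φ̈(τ+2q) dτ. -/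
open Real

/-!
On `[0, π]` the shifted argument `τ + 2q` stays in `[0, 2π]`, where `g` is the constant
`c = φ̇(0)/π` up to `π` and `c - φ̈` after it (by `2π`-periodicity of `g` and of `φ̈`). Splitting
the integral at `π - 2q` therefore gives `c ∫₀^π φ̈ + I(q)` (only open subintervals matter, so
the values of `g` at the jumps play no role), and `∫₀^π φ̈ = φ̇(π) - φ̇(0) = -2φ̇(0)`
by antiperiodicity.
-/

open Function Set intervalIntegral

theorem Function.Antiperiodic.deriv {𝕜 F : Type*} [NontriviallyNormedField 𝕜]
    [NormedAddCommGroup F] [NormedSpace 𝕜 F] {f : 𝕜 → F} {c : 𝕜} (h : Antiperiodic f c) :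
    Antiperiodic (deriv f) c := fun x => by
  rw [← deriv_comp_add_const, show (fun x => f (x + c)) = -f from funext h, deriv.neg']

theorem Set.EqOn.add_of_periodic {α β : Type*} [AddCommGroup α] [PartialOrder α]
    [IsOrderedAddMonoid α] {f g : α → β} {a b p : α} (hf : Periodic f p) (hg : Periodic g p)
    (h : EqOn f g (Ico a b)) : EqOn f g (Ico (a + p) (b + p)) := fun x hx => by
  have hx' : x - p ∈ Ico a b := ⟨le_sub_iff_add_le.2 hx.1, sub_lt_iff_lt_add.2 hx.2⟩
  simpa only [hf.sub_eq, hg.sub_eq] using h hx'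

theorem integral_mul_comp_add_of_eqOn_Ico {f g : ℝ → ℝ} {c T a : ℝ} (hf : Continuous f)
    (hg₁ : EqOn g (fun _ => c) (Ico 0 T)) (hg₂ : EqOn g (fun s => c - f s) (Ico T (2 * T)))
    (ha₀ : 0 ≤ a) (haT : a ≤ T) :
    ∫ τ in 0..T, f τ * g (τ + a)
      = c * (∫ τ in 0..T, f τ) - ∫ τ in (T - a)..T, f τ * f (τ + a) := by
  have hf_shift : Continuous fun τ => f τ * f (τ + a) := hf.mul (hf.comp (continuous_add_const a))
  have h₁ : EqOn (fun τ => c * f τ) (fun τ => f τ * g (τ + a)) (Ioo 0 (T - a)) :=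
    fun τ hτ => by
      dsimp only
      rw [hg₁ ⟨by linarith [hτ.1], by linarith [hτ.2]⟩]
      ring
  have h₂ : EqOn (fun τ => c * f τ - f τ * f (τ + a)) (fun τ => f τ * g (τ + a))
      (Ioo (T - a) T) := fun τ hτ => by
    dsimp only
    rw [hg₂ ⟨by linarith [hτ.1], by linarith [hτ.2]⟩]
    ring
  have hcf : Continuous fun τ => c * f τ := continuous_const.mul hf
  have hsub : Continuous fun τ => c * f τ - f τ * f (τ + a) := hcf.sub hf_shift
  have hTa : 0 ≤ T - a := by linarith
  have hTa' : T - a ≤ T := by linarith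
  calc ∫ τ in 0..T, f τ * g (τ + a)
      = (∫ τ in 0..(T - a), f τ * g (τ + a)) + ∫ τ in (T - a)..T, f τ * g (τ + a) :=
        (integral_add_adjacent_intervals
          ((hcf.intervalIntegrable _ _).congr_uIoo (uIoo_of_le hTa ▸ h₁))
          ((hsub.intervalIntegrable _ _).congr_uIoo (uIoo_of_le hTa' ▸ h₂))).symm
    _ = (∫ τ in 0..(T - a), c * f τ) + ∫ τ in (T - a)..T, (c * f τ - f τ * f (τ + a)) := by
        rw [integral_congr_Ioo_of_le hTa h₁, integral_congr_Ioo_of_le hTa' h₂]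
    _ = ((∫ τ in 0..(T - a), c * f τ) + ∫ τ in (T - a)..T, c * f τ)
          - ∫ τ in (T - a)..T, f τ * f (τ + a) := by
        rw [integral_sub (hcf.intervalIntegrable _ _) (hf_shift.intervalIntegrable _ _)]
        ring
    _ = c * (∫ τ in 0..T, f τ) - ∫ τ in (T - a)..T, f τ * f (τ + a) := by
        rw [integral_add_adjacent_intervals (hcf.intervalIntegrable _ _)
          (hcf.intervalIntegrable _ _), integral_const_mul]

theorem coefficient_M1_formula_general
    (φ : ℝ → ℝ) (hφ : ContDiff ℝ 3 φ)
    (hanti : ∀ τ, φ (τ + π) = -φ τ)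
    (g : ℝ → ℝ) (hgper : Function.Periodic g (2 * π))
    (hg1 : ∀ τ ∈ Set.Ico (-π) (0:ℝ),
      g τ = (1/π) * deriv φ 0 - deriv (deriv φ) τ)
    (hg2 : ∀ τ ∈ Set.Ico (0:ℝ) π, g τ = (1/π) * deriv φ 0) :
    ∀ q ∈ Set.Icc (0:ℝ) (π/2),
      (∫ τ in (0:ℝ)..π, deriv (deriv φ) τ * g (τ + 2 * q))
        = -(2/π) * (deriv φ 0) ^ 2
          + (-(∫ τ in (π - 2 * q)..π,
              deriv (deriv φ) τ * deriv (deriv φ) (τ + 2 * q))) := by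
  rintro q ⟨hq₀, hq₁⟩
  have hφ₁ : ContDiff ℝ 2 (deriv φ) := hφ.deriv'
  have hφ' : Antiperiodic (deriv φ) π := Antiperiodic.deriv hanti
  have hφ'' : Periodic (deriv (deriv φ)) (2 * π) := hφ'.deriv.periodic_two_mul
  have hint : ∫ τ in 0..π, deriv (deriv φ) τ = -2 * deriv φ 0 := by
    rw [integral_deriv_eq_sub (fun x _ => (hφ₁.differentiable (by norm_num)).differentiableAt)
      ((hφ₁.continuous_deriv (by norm_num)).intervalIntegrable _ _), ← zero_add π, hφ' 0]
    ring
  have hg₂ : EqOn g (fun s => (1/π) * deriv φ 0 - deriv (deriv φ) s) (Ico π (2 * π)) := by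
    simpa only [show -π + 2 * π = π by ring, zero_add] using
      EqOn.add_of_periodic hgper (fun x => by simp only [hφ'' x]) hg1
  rw [integral_mul_comp_add_of_eqOn_Ico (hφ₁.continuous_deriv (by norm_num)) hg2 hg₂
    (by linarith) (by linarith), hint]
  ring

/-- The coupling coefficient `M₁`: with `g = ż₊` the derivative of the explicit
zero-mean periodic solution of `z̈ = V''(φ)φ̇`, one has
`∫₀^π φ̈(τ) g(τ+2q) dτ = -(2/π)φ̇(0)² + I(q)` for `q ∈ [0, π/2]`, where
`I(q) = -∫_{π-2q}^{π} φ̈(τ)φ̈(τ+2q) dτ`. -/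
theorem coefficient_M1_formula
    (φ : ℝ → ℝ) (hφ : ContDiff ℝ 3 φ)
    (hper : Function.Periodic φ (2 * π))
    (hode : ∀ τ, deriv (deriv φ) τ + |φ τ| ^ ((1:ℝ)/2) * φ τ = 0)
    (hodd : ∀ τ, φ (-τ) = -φ τ)
    (hanti : ∀ τ, φ (τ + π) = -φ τ)
    (hpos : ∀ τ ∈ Set.Icc (0:ℝ) π, 0 ≤ φ τ)
    (g : ℝ → ℝ) (hgper : Function.Periodic g (2 * π))
    (hg1 : ∀ τ ∈ Set.Ico (-π) (0:ℝ),
      g τ = (1/π) * deriv φ 0 - deriv (deriv φ) τ)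
    (hg2 : ∀ τ ∈ Set.Ico (0:ℝ) π, g τ = (1/π) * deriv φ 0) :
    ∀ q ∈ Set.Icc (0:ℝ) (π/2),
      (∫ τ in (0:ℝ)..π, deriv (deriv φ) τ * g (τ + 2 * q))
        = -(2/π) * (deriv φ 0) ^ 2
          + (-(∫ τ in (π - 2 * q)..π,
              deriv (deriv φ) τ * deriv (deriv φ) (τ + 2 * q))) :=
  coefficient_M1_formula_general φ hφ hanti g hgper hg1 hg2
end

section
/- Let φ : ℝ → ℝ be a C², 2π-periodic solution of φ̈(τ) + |φ(τ)|^{1/2}φ(τ) = 0 with minimal period 2π, odd, with φ(0) = 0 and φ̇(0) > 0. Then ∫₀^{π} (φ̈(τ))² dτ > (2/π)(φ̇(0))². -/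
open Real Function

/-!
Oddness and `2π`-periodicity force `φ π = 0`, so conservation of the energy
`φ̇² / 2 + |φ| ^ (5/2) / (5/2)` gives `φ̇ π = ± φ̇ 0`. If `φ̇ π = φ̇ 0`, the phase curves
`t ↦ (φ t, φ̇ t)` and `t ↦ (φ (t + π), φ̇ (t + π))` agree at `t = 0`; the force
`x ↦ |x| ^ (1/2) * x` is `C¹`, hence Lipschitz on the compact phase orbit, so uniqueness for
the ODE makes `φ` `π`-periodic, contradicting minimality. Hence
`∫₀^π φ̈ = φ̇ π - φ̇ 0 = -2 φ̇ 0`, and Cauchy–Schwarz gives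
`∫₀^π φ̈² ≥ 4 φ̇(0)² / π > 2 φ̇(0)² / π`.
-/

lemma hasDerivAt_abs_rpow_mul_self_of_ne_zero (p : ℝ) {x : ℝ} (hx : x ≠ 0) :
    HasDerivAt (fun y : ℝ => |y| ^ p * y) ((p + 1) * |x| ^ p) x := by
  have hx' : |x| ≠ 0 := abs_ne_zero.mpr hx
  refine (((hasDerivAt_abs hx).rpow_const (Or.inl hx')).mul (hasDerivAt_id x)).congr_deriv ?_
  have hs : (SignType.sign x : ℝ) * x = |x| := sign_mul_self x
  rw [rpow_sub_one hx', id]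
  field_simp
  linear_combination p * hs

lemma hasDerivAt_abs_rpow_mul_self {p : ℝ} (hp : 0 ≤ p) (x : ℝ) :
    HasDerivAt (fun y : ℝ => |y| ^ p * y) ((p + 1) * |x| ^ p) x := by
  have hcont : Continuous fun y : ℝ => |y| ^ p :=
    continuous_abs.rpow_const fun _ => Or.inr hp
  exact hasDerivAt_of_hasDerivAt_of_ne' (x := 0)
    (fun y hy => hasDerivAt_abs_rpow_mul_self_of_ne_zero p hy)
    (hcont.mul continuous_id).continuousAt (continuous_const.mul hcont).continuousAt x

lemma contDiff_abs_rpow_mul_self {p : ℝ} (hp : 0 ≤ p) :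
    ContDiff ℝ 1 fun y : ℝ => |y| ^ p * y := by
  refine contDiff_one_iff_deriv.mpr
    ⟨fun x => (hasDerivAt_abs_rpow_mul_self hp x).differentiableAt, ?_⟩
  rw [funext fun x => (hasDerivAt_abs_rpow_mul_self hp x).deriv]
  exact continuous_const.mul (continuous_abs.rpow_const fun _ => Or.inr hp)

lemma hasDerivAt_abs_rpow_add_two_div {p : ℝ} (hp : -1 < p) (x : ℝ) :
    HasDerivAt (fun y : ℝ => |y| ^ (p + 2) / (p + 2)) (|x| ^ p * x) x := by
  refine ((hasDerivAt_abs_rpow x (by linarith : 1 < p + 2)).div_const (p + 2)).congr_deriv ?_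
  rw [add_sub_cancel_right]
  field_simp [(by linarith : p + 2 ≠ 0)]

theorem Function.Periodic.deriv {f : ℝ → ℝ} {c : ℝ} (h : Periodic f c) : Periodic (deriv f) c :=
  fun x => by rw [← deriv_comp_add_const, show (fun y => f (y + c)) = f from funext h]

theorem Function.Periodic.eq_zero_of_odd {f : ℝ → ℝ} {c : ℝ} (h : Periodic f (2 * c))
    (hodd : Function.Odd f) : f c = 0 := by
  have : f c = f (-c) := by simpa [two_mul] using h (-c)
  linarith [hodd c]

theorem energy_conservation {V g φ φ' : ℝ → ℝ} (hV : ∀ x, HasDerivAt V (g x) x)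
    (hφ : ∀ t, HasDerivAt φ (φ' t) t) (hφ' : ∀ t, HasDerivAt φ' (-g (φ t)) t) (a b : ℝ) :
    φ' a ^ 2 / 2 + V (φ a) = φ' b ^ 2 / 2 + V (φ b) := by
  have hE : ∀ t, HasDerivAt (fun t => φ' t ^ 2 / 2 + V (φ t)) 0 t := fun t => by
    refine ((((hφ' t).pow 2).div_const 2).add ((hV (φ t)).comp t (hφ t))).congr_deriv ?_
    push_cast
    ring
  exact is_const_of_deriv_eq_zero (fun t => (hE t).differentiableAt) (fun t => (hE t).deriv) a b

theorem Function.Periodic.periodic_of_hasDerivAt_of_eq {E : Type*} [NormedAddCommGroup E]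
    [NormedSpace ℝ E] {F : E → E} (hF : LocallyLipschitz F) {f : ℝ → E}
    (hf : ∀ t, HasDerivAt f (F (f t)) t) {T : ℝ} (hT : T ≠ 0) (hper : Periodic f T)
    {t₀ S : ℝ} (hS : f (t₀ + S) = f t₀) : Periodic f S := by
  obtain ⟨K, hK⟩ := hF.locallyLipschitzOn.exists_lipschitzOnWith_of_compact
    (hper.compact_of_continuous hT (continuous_iff_continuousAt.mpr fun t => (hf t).continuousAt))
  have := ODE_solution_unique_univ (v := fun _ => F) (s := fun _ => Set.range f) (t₀ := t₀)
    (fun _ => hK) (fun t => ⟨hf t, Set.mem_range_self t⟩)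
    (fun t => ⟨(hf (t + S)).comp_add_const t S, Set.mem_range_self _⟩) hS.symm
  exact fun t => (congrFun this t).symm

theorem Function.Periodic.periodic_of_second_order_of_eq {g : ℝ → ℝ} (hg : ContDiff ℝ 1 g)
    {φ φ' : ℝ → ℝ} (hφ : ∀ t, HasDerivAt φ (φ' t) t) (hφ' : ∀ t, HasDerivAt φ' (-g (φ t)) t)
    {T : ℝ} (hT : T ≠ 0) (hper : Periodic φ T) (hper' : Periodic φ' T) {t₀ S : ℝ}
    (hS : φ (t₀ + S) = φ t₀) (hS' : φ' (t₀ + S) = φ' t₀) : Periodic φ S := by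
  have hF : ContDiff ℝ 1 fun z : ℝ × ℝ => (z.2, -g z.1) :=
    contDiff_snd.prodMk (hg.comp contDiff_fst).neg
  have := Periodic.periodic_of_hasDerivAt_of_eq hF.locallyLipschitz
    (f := fun t => (φ t, φ' t)) (fun t => (hφ t).prodMk (hφ' t)) hT
    (fun t => Prod.ext (hper t) (hper' t)) (Prod.ext hS hS')
  exact fun t => congrArg Prod.fst (this t)

lemma sq_intervalIntegral_le_mul_intervalIntegral_sq {h : ℝ → ℝ} (hh : Continuous h) {a b : ℝ}
    (hab : a ≤ b) :
    (∫ x in a..b, h x) ^ 2 ≤ (b - a) * ∫ x in a..b, h x ^ 2 := by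
  have hi : IntervalIntegrable h MeasureTheory.volume a b := hh.intervalIntegrable a b
  have hi2 : IntervalIntegrable (fun x => h x ^ 2) MeasureTheory.volume a b :=
    (hh.pow 2).intervalIntegrable a b
  have hexp : ∀ s : ℝ, ∫ x in a..b, (h x + s) ^ 2
      = (b - a) * (s * s) + 2 * (∫ x in a..b, h x) * s + ∫ x in a..b, h x ^ 2 := fun s => by
    have e : ∀ x, (h x + s) ^ 2 = h x ^ 2 + h x * (2 * s) + s ^ 2 := fun x => by ring
    simp_rw [e]
    rw [intervalIntegral.integral_add (hi2.add (hi.mul_const _)) intervalIntegrable_const,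
      intervalIntegral.integral_add hi2 (hi.mul_const _), intervalIntegral.integral_mul_const,
      intervalIntegral.integral_const, smul_eq_mul]
    ring
  have hquad : ∀ s : ℝ,
      0 ≤ (b - a) * (s * s) + 2 * (∫ x in a..b, h x) * s + ∫ x in a..b, h x ^ 2 :=
    fun s => hexp s ▸ intervalIntegral.integral_nonneg hab fun x _ => sq_nonneg _
  have := discrim_le_zero hquad
  rw [discrim] at this
  linarith

/-- The key inequality of Lemma 3: for the normalized 2π-periodic oscillator
solution, `∫₀^π φ̈² dτ > (2/π)φ̇(0)²`. -/
theorem key_inequality_lemma3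
    (φ : ℝ → ℝ) (hφ : ContDiff ℝ 2 φ)
    (hode : ∀ τ, deriv (deriv φ) τ + |φ τ| ^ ((1:ℝ)/2) * φ τ = 0)
    (hper : Function.Periodic φ (2 * π))
    (hmin : ∀ p, 0 < p → Function.Periodic φ p → 2 * π ≤ p)
    (hodd : ∀ τ, φ (-τ) = -φ τ)
    (h0 : φ 0 = 0) (h0' : 0 < deriv φ 0) :
    (2/π) * (deriv φ 0) ^ 2 < ∫ τ in (0:ℝ)..π, (deriv (deriv φ) τ) ^ 2 := by
  have hφ' : ContDiff ℝ 1 (deriv φ) := hφ.deriv' (n := 1)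
  have hφ₁ : ∀ t, HasDerivAt φ (deriv φ t) t :=
    fun t => (hφ.differentiable two_ne_zero t).hasDerivAt
  have hφ₂ : ∀ t, HasDerivAt (deriv φ) (-(|φ t| ^ ((1:ℝ)/2) * φ t)) t := fun t => by
    rw [← eq_neg_of_add_eq_zero_left (hode t)]
    exact (hφ'.differentiable one_ne_zero t).hasDerivAt
  have hφπ : φ π = 0 := hper.eq_zero_of_odd hodd
  have hsq : deriv φ π ^ 2 = deriv φ 0 ^ 2 := by
    have := energy_conservation (hasDerivAt_abs_rpow_add_two_div (by norm_num)) hφ₁ hφ₂ π 0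
    rw [hφπ, h0] at this
    linarith
  have hflip : deriv φ π = -deriv φ 0 := by
    refine (sq_eq_sq_iff_eq_or_eq_neg.mp hsq).resolve_left fun h => ?_
    have hπper := hper.periodic_of_second_order_of_eq
      (contDiff_abs_rpow_mul_self (by norm_num)) hφ₁ hφ₂ (by positivity) hper.deriv
      (t₀ := 0) (S := π) (by simp [hφπ, h0]) (by simp [h])
    linarith [hmin π pi_pos hπper, pi_pos]
  have hint : ∫ τ in (0:ℝ)..π, deriv (deriv φ) τ = -2 * deriv φ 0 := by
    rw [intervalIntegral.integral_deriv_eq_sub (fun t _ => hφ'.differentiable one_ne_zero t)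
      ((hφ'.continuous_deriv le_rfl).intervalIntegrable 0 π), hflip]
    ring
  have hCS :=
    sq_intervalIntegral_le_mul_intervalIntegral_sq (hφ'.continuous_deriv le_rfl) pi_pos.le
  rw [hint, sub_zero] at hCS
  calc (2/π) * deriv φ 0 ^ 2 < (-2 * deriv φ 0) ^ 2 / π := by
        rw [div_mul_eq_mul_div]
        gcongr
        nlinarith
    _ ≤ ∫ τ in (0:ℝ)..π, deriv (deriv φ) τ ^ 2 := by
        rw [div_le_iff₀' pi_pos]
        exact hCS
end

section
/- Let φ : ℝ → ℝ be a C³, 2π-periodic solution of φ̈ + |φ|^{1/2}φ = 0 with minimal period 2π, odd, φ(0) = 0, φ̇(0) > 0, satisfying φ(τ+π) = −φ(τ) and φ(τ) ≥ 0 on [0,π]. Define I(q) := −∫_{π−2q}^{π} φ̈(τ)φ̈(τ+2q)dτ for q ∈ [0,π/2]. Then there exists a unique q₀ ∈ (0,π/2) such that I(q₀) = (2/π)(φ̇(0))², and moreover I(q) < (2/π)(φ̇(0))² for all q ∈ [0,q₀) while I(q) > (2/π)(φ̇(0))² for all q ∈ (q₀,π/2]. -/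
/-!
With `g = |φ|^{1/2} φ = -φ̈`, the symmetries `φ (π - τ) = φ τ` and `φ (τ + π) = -φ τ` turn
`I(q)` into `2 ∫₀^q g(q+s) g(q-s) ds`. On `[0, π]` the function `φ` is nonnegative, hence
concave, and symmetric about `π/2`; so `φ̇ ≥ 0` on `[0, π/2]`, `φ > 0` on `(0, π)`, and each
product `φ(q+s) φ(q-s)` increases with `q` up to `π/2`. Thus `I` is continuous and strictly
increasing on `[0, π/2]`, with `I(0) = 0` and, by Cauchy–Schwarz and `∫₀^π g = 2 φ̇(0)`,
`I(π/2) = ∫₀^π g² ≥ (4/π) φ̇(0)²`, twice the threshold. The intermediate value theorem gives `q₀`.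
-/

open Real Set intervalIntegral

noncomputable section

/-- The nonlinearity `|x| ^ (1/2) * x` of the oscillator, with `√` in place of `rpow`. -/
def hertz (x : ℝ) : ℝ := √|x| * x

theorem continuous_hertz : Continuous hertz := by
  unfold hertz; fun_prop

theorem hertz_neg (x : ℝ) : hertz (-x) = -hertz x := by
  simp [hertz]

theorem hertz_nonneg {x : ℝ} (hx : 0 ≤ x) : 0 ≤ hertz x :=
  mul_nonneg (sqrt_nonneg _) hx

theorem hertz_pos {x : ℝ} (hx : 0 < x) : 0 < hertz x :=
  mul_pos (sqrt_pos.2 (abs_pos.2 hx.ne')) hx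

theorem hertz_mul_hertz {x y : ℝ} (hx : 0 ≤ x) (hy : 0 ≤ y) :
    hertz x * hertz y = hertz (x * y) := by
  simp only [hertz, abs_of_nonneg hx, abs_of_nonneg hy, abs_of_nonneg (mul_nonneg hx hy),
    sqrt_mul hx]
  ring

theorem monotoneOn_hertz : MonotoneOn hertz (Ici 0) := fun x hx y hy hxy => by
  simp only [hertz, abs_of_nonneg (mem_Ici.1 hx), abs_of_nonneg (mem_Ici.1 hy)]
  exact mul_le_mul (sqrt_le_sqrt hxy) hxy hx (sqrt_nonneg _)

theorem StrictMonoOn.existsUnique_crossing {f : ℝ → ℝ} {a b c : ℝ} (hab : a ≤ b)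
    (hf : ContinuousOn f (Icc a b)) (hmono : StrictMonoOn f (Icc a b))
    (ha : f a < c) (hb : c < f b) :
    ∃! x, x ∈ Ioo a b ∧ f x = c ∧ (∀ y ∈ Ico a x, f y < c) ∧ (∀ y ∈ Ioc x b, c < f y) := by
  obtain ⟨x, hx, rfl⟩ := intermediate_value_Ioo hab hf ⟨ha, hb⟩
  have hxI : x ∈ Icc a b := Ioo_subset_Icc_self hx
  refine ⟨x, ⟨hx, rfl, fun y hy => ?_, fun y hy => ?_⟩, fun y ⟨hy, hyx, _⟩ => ?_⟩
  · exact hmono ⟨hy.1, hy.2.le.trans hxI.2⟩ hxI hy.2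
  · exact hmono hxI ⟨hxI.1.trans hy.1.le, hy.2⟩ hy.1
  · exact hmono.injOn (Ioo_subset_Icc_self hy) hxI hyx

section SymmetricConcave

variable {φ : ℝ → ℝ} {L : ℝ}

theorem deriv_sub_eq_neg_of_symm (hsymm : ∀ t, φ (L - t) = φ t) (t : ℝ) :
    deriv φ (L - t) = -deriv φ t := by
  have h := deriv_comp_const_sub (f := φ) (a := L) (x := t)
  simp only [hsymm] at h
  linarith

variable (hsymm : ∀ t, φ (L - t) = φ t) (hconc : AntitoneOn (deriv φ) (Icc 0 L))
include hsymm hconc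

theorem deriv_nonneg_of_symm {t : ℝ} (ht : t ∈ Icc 0 (L / 2)) : 0 ≤ deriv φ t := by
  obtain ⟨ht0, htL⟩ := ht
  have h := hconc ⟨ht0, by linarith⟩ ⟨by linarith, by linarith⟩ (by linarith : t ≤ L - t)
  rw [deriv_sub_eq_neg_of_symm hsymm] at h
  linarith

theorem monotoneOn_of_symm (hφ : Differentiable ℝ φ) : MonotoneOn φ (Icc 0 (L / 2)) :=
  monotoneOn_of_deriv_nonneg (convex_Icc _ _) hφ.continuous.continuousOn hφ.differentiableOn
    fun _ ht => deriv_nonneg_of_symm hsymm hconc (interior_subset ht)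

theorem le_of_symm (hφ : Differentiable ℝ φ) {x y : ℝ} (hy : 0 ≤ y) (hyx : y ≤ x)
    (hxy : x ≤ L - y) : φ y ≤ φ x := by
  have hmono := monotoneOn_of_symm hsymm hconc hφ
  rcases le_total x (L / 2) with hx | hx
  · exact hmono ⟨hy, hyx.trans hx⟩ ⟨hy.trans hyx, hx⟩ hyx
  · rw [← hsymm x]
    exact hmono ⟨hy, by linarith⟩ ⟨by linarith, by linarith⟩ (by linarith)

theorem monotoneOn_mul_of_symm (hφ : Differentiable ℝ φ) (hnonneg : ∀ t ∈ Icc 0 L, 0 ≤ φ t)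
    {s : ℝ} (hs : 0 ≤ s) : MonotoneOn (fun c => φ (c + s) * φ (c - s)) (Icc s (L / 2)) := by
  have hderiv : ∀ c, HasDerivAt (fun c => φ (c + s) * φ (c - s))
      (deriv φ (c + s) * φ (c - s) + φ (c + s) * deriv φ (c - s)) c := fun c =>
    ((hφ _).hasDerivAt.comp_add_const c s).mul ((hφ _).hasDerivAt.comp_sub_const c s)
  refine monotoneOn_of_deriv_nonneg (convex_Icc _ _)
    (HasDerivAt.continuousOn fun c _ => hderiv c)
    (fun c _ => (hderiv c).differentiableAt.differentiableWithinAt) fun c hc => ?_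
  obtain ⟨hsc, hcL⟩ := interior_Icc (a := s) ▸ hc
  rw [(hderiv c).deriv]
  have hy : c - s ∈ Icc 0 (L / 2) := ⟨by linarith, by linarith⟩
  have hφ'y := deriv_nonneg_of_symm hsymm hconc hy
  have hφy := hnonneg _ ⟨hy.1, by linarith⟩
  -- `c + s` lies between `c - s` and its mirror image `L - (c - s)`, so that
  -- `φ (c + s) ≥ φ (c - s)` and `φ' (c + s) ≥ φ' (L - (c - s)) = -φ' (c - s)`.
  have hφx : φ (c - s) ≤ φ (c + s) := le_of_symm hsymm hconc hφ hy.1 (by linarith) (by linarith)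
  have hφ'x : -deriv φ (c - s) ≤ deriv φ (c + s) := by
    rw [← deriv_sub_eq_neg_of_symm hsymm]
    exact hconc ⟨by linarith, by linarith⟩ ⟨by linarith, by linarith⟩ (by linarith)
  nlinarith [mul_le_mul_of_nonneg_right hφ'x hφy, mul_le_mul_of_nonneg_right hφx hφ'y]

theorem monotoneOn_hertz_mul_of_symm (hφ : Differentiable ℝ φ)
    (hnonneg : ∀ t ∈ Icc 0 L, 0 ≤ φ t) {s : ℝ} (hs : 0 ≤ s) :
    MonotoneOn (fun c => hertz (φ (c + s)) * hertz (φ (c - s))) (Icc s (L / 2)) := by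
  have hnonneg' : ∀ c ∈ Icc s (L / 2), 0 ≤ φ (c + s) ∧ 0 ≤ φ (c - s) := fun c ⟨hsc, hcL⟩ =>
    ⟨hnonneg _ ⟨by linarith, by linarith⟩, hnonneg _ ⟨by linarith, by linarith⟩⟩
  refine (monotoneOn_hertz.comp (monotoneOn_mul_of_symm hsymm hconc hφ hnonneg hs)
    fun c hc => mul_nonneg (hnonneg' c hc).1 (hnonneg' c hc).2).congr fun c hc => ?_
  exact (hertz_mul_hertz (hnonneg' c hc).1 (hnonneg' c hc).2).symm

theorem pos_of_symm (hφ : ContDiff ℝ 1 φ) (h0 : φ 0 = 0) (h0' : 0 < deriv φ 0) {t : ℝ}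
    (ht : t ∈ Ioo 0 L) : 0 < φ t := by
  suffices h : ∀ t ∈ Ioc 0 (L / 2), 0 < φ t by
    rcases le_total t (L / 2) with htL | htL
    · exact h t ⟨ht.1, htL⟩
    · rw [← hsymm t]
      exact h _ ⟨by linarith [ht.2], by linarith⟩
  intro t ht
  have hd := hφ.differentiable one_ne_zero
  have hc := hφ.continuous_deriv le_rfl
  have hint : ∫ x in (0:ℝ)..t, deriv φ x = φ t := by
    rw [integral_eq_sub_of_hasDerivAt (fun x _ => (hd x).hasDerivAt) (hc.intervalIntegrable _ _),
      h0, sub_zero]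
  rw [← hint]
  exact integral_pos ht.1 hc.continuousOn
    (fun x hx => deriv_nonneg_of_symm hsymm hconc ⟨hx.1.le, hx.2.trans ht.2⟩)
    ⟨0, ⟨le_rfl, ht.1.le⟩, h0'⟩

end SymmetricConcave

theorem sq_integral_le_mul_integral_sq {f : ℝ → ℝ} (hf : Continuous f) {a b : ℝ} (hab : a < b) :
    (∫ x in a..b, f x) ^ 2 ≤ (b - a) * ∫ x in a..b, f x ^ 2 := by
  set m := (∫ x in a..b, f x) / (b - a)
  have hba : b - a ≠ 0 := sub_ne_zero.2 hab.ne'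
  have hexpand : ∫ x in a..b, (f x - m) ^ 2
      = (∫ x in a..b, f x ^ 2) - 2 * m * (∫ x in a..b, f x) + (b - a) * m ^ 2 := by
    have hcross : ∫ x in a..b, 2 * f x * m = 2 * m * ∫ x in a..b, f x := by
      rw [integral_mul_const, integral_const_mul]
      ring
    simp only [sub_sq]
    rw [integral_add, integral_sub, hcross, integral_const, smul_eq_mul]
    all_goals exact Continuous.intervalIntegrable (by fun_prop) _ _
  have hnonneg : 0 ≤ ∫ x in a..b, (f x - m) ^ 2 := integral_nonneg hab.le fun _ _ => sq_nonneg _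
  rw [hexpand] at hnonneg
  have hm : (b - a) * m = ∫ x in a..b, f x := mul_div_cancel₀ _ hba
  nlinarith

def symmetricProductIntegral (G : ℝ → ℝ) (q : ℝ) : ℝ :=
  ∫ s in (0:ℝ)..q, G (q + s) * G (q - s)

section SymmetricProductIntegral

variable {G : ℝ → ℝ}

theorem continuous_symmetricProductIntegral (hG : Continuous G) :
    Continuous (symmetricProductIntegral G) :=
  continuous_parametric_intervalIntegral_of_continuous (by fun_prop) continuous_id

theorem strictMonoOn_symmetricProductIntegral {L : ℝ} (hG : Continuous G)
    (hpos : ∀ x ∈ Ioo 0 L, 0 < G x)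
    (hmono : ∀ s, 0 ≤ s → MonotoneOn (fun q => G (q + s) * G (q - s)) (Icc s (L / 2))) :
    StrictMonoOn (symmetricProductIntegral G) (Icc 0 (L / 2)) := by
  rintro q₁ ⟨hq₁, -⟩ q₂ ⟨-, hq₂⟩ hlt
  have hint : ∀ q a b,
      IntervalIntegrable (fun s => G (q + s) * G (q - s)) MeasureTheory.volume a b :=
    fun q a b => Continuous.intervalIntegrable (by fun_prop) a b
  have hgrow : symmetricProductIntegral G q₁ ≤ ∫ s in (0:ℝ)..q₁, G (q₂ + s) * G (q₂ - s) :=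
    integral_mono_on hq₁ (hint _ _ _) (hint _ _ _) fun s hs =>
      hmono s hs.1 ⟨hs.2, by linarith⟩ ⟨by linarith [hs.2], hq₂⟩ hlt.le
  have htail : 0 < ∫ s in q₁..q₂, G (q₂ + s) * G (q₂ - s) :=
    intervalIntegral_pos_of_pos_on (hint _ _ _) (fun s hs => mul_pos
      (hpos _ ⟨by linarith [hs.1], by linarith [hs.2]⟩)
      (hpos _ ⟨by linarith [hs.2], by linarith [hs.1]⟩)) hlt
  have hsplit : symmetricProductIntegral G q₂ = _ + _ :=
    (integral_add_adjacent_intervals (hint q₂ 0 q₁) (hint q₂ q₁ q₂)).symm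
  linarith

theorem integral_mul_comp_sub_eq_symmetricProductIntegral (hG : Continuous G) (q : ℝ) :
    ∫ u in (0:ℝ)..2 * q, G u * G (2 * q - u) = 2 * symmetricProductIntegral G q := by
  have hleft : ∫ u in (0:ℝ)..q, G u * G (2 * q - u) = symmetricProductIntegral G q := by
    have h := integral_comp_sub_left (fun u => G u * G (2 * q - u)) q (a := 0) (b := q)
    rw [sub_self, sub_zero] at h
    rw [← h, symmetricProductIntegral]
    refine integral_congr fun s _ => ?_
    rw [show 2 * q - (q - s) = q + s by ring, mul_comm]
  have hright : ∫ u in q..2 * q, G u * G (2 * q - u) = symmetricProductIntegral G q := by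
    have h := integral_comp_add_left (fun u => G u * G (2 * q - u)) q (a := 0) (b := q)
    rw [add_zero, ← two_mul] at h
    rw [← h, symmetricProductIntegral]
    refine integral_congr fun s _ => ?_
    rw [show 2 * q - (q + s) = q - s by ring]
  have hint : ∀ a b,
      IntervalIntegrable (fun u => G u * G (2 * q - u)) MeasureTheory.volume a b :=
    fun a b => Continuous.intervalIntegrable (by fun_prop) a b
  rw [← integral_add_adjacent_intervals (hint 0 q) (hint q _), hleft, hright, two_mul]

variable {L : ℝ} (hG : Continuous G) (hsymm : ∀ t, G (L - t) = G t)
include hG hsymm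

theorem integral_mul_comp_add_eq_symmetricProductIntegral (hanti : ∀ t, G (t + L) = -G t)
    (q : ℝ) :
    ∫ τ in (L - 2 * q)..L, G τ * G (τ + 2 * q) = -(2 * symmetricProductIntegral G q) := by
  have h := integral_comp_sub_left (fun τ => G τ * G (τ + 2 * q)) L (a := 0) (b := 2 * q)
  rw [sub_zero] at h
  rw [← h, ← integral_mul_comp_sub_eq_symmetricProductIntegral hG, ← integral_neg]
  refine integral_congr fun u _ => ?_
  rw [hsymm, show L - u + 2 * q = 2 * q - u + L by ring, hanti, mul_neg]

theorem two_mul_symmetricProductIntegral_half :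
    2 * symmetricProductIntegral G (L / 2) = ∫ u in (0:ℝ)..L, G u ^ 2 := by
  rw [← integral_mul_comp_sub_eq_symmetricProductIntegral hG, mul_div_cancel₀ _ two_ne_zero]
  refine integral_congr fun u _ => ?_
  rw [hsymm, sq]

end SymmetricProductIntegral

section HertzOscillator

variable {φ : ℝ → ℝ} {L : ℝ} (hφ : ContDiff ℝ 2 φ)
  (hode : ∀ τ, deriv (deriv φ) τ = -hertz (φ τ))
include hφ hode

theorem antitoneOn_deriv_of_nonneg (hnonneg : ∀ t ∈ Icc 0 L, 0 ≤ φ t) :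
    AntitoneOn (deriv φ) (Icc 0 L) := by
  have hd : Differentiable ℝ (deriv φ) :=
    (contDiff_succ_iff_deriv.1 hφ).2.2.differentiable one_ne_zero
  refine antitoneOn_of_deriv_nonpos (convex_Icc _ _) hd.continuous.continuousOn
    hd.differentiableOn fun t ht => ?_
  rw [hode, neg_nonpos]
  exact hertz_nonneg (hnonneg t (interior_subset ht))

variable (hsymm : ∀ t, φ (L - t) = φ t)
include hsymm

theorem integral_hertz_comp_eq : ∫ t in (0:ℝ)..L, hertz (φ t) = 2 * deriv φ 0 := by
  have hd : ContDiff ℝ 1 (deriv φ) := (contDiff_succ_iff_deriv.1 hφ).2.2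
  have hint := integral_eq_sub_of_hasDerivAt
    (fun x _ => (hd.differentiable one_ne_zero x).hasDerivAt)
    ((hd.continuous_deriv le_rfl).intervalIntegrable 0 L)
  have hL := deriv_sub_eq_neg_of_symm hsymm 0
  rw [sub_zero] at hL
  simp only [hode, intervalIntegral.integral_neg] at hint
  linarith

theorem four_div_mul_sq_deriv_le_symmetricProductIntegral (hL : 0 < L) :
    4 / L * deriv φ 0 ^ 2 ≤ 2 * symmetricProductIntegral (fun t => hertz (φ t)) (L / 2) := by
  have hG : Continuous fun t => hertz (φ t) := continuous_hertz.comp hφ.continuous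
  rw [two_mul_symmetricProductIntegral_half hG fun t => by rw [hsymm],
    div_mul_eq_mul_div, div_le_iff₀ hL]
  have h := sq_integral_le_mul_integral_sq hG hL
  rw [integral_hertz_comp_eq hφ hode hsymm, sub_zero] at h
  linarith

end HertzOscillator

end

theorem critical_wavenumber_general
    (φ : ℝ → ℝ) (hφ : ContDiff ℝ 3 φ)
    (hode : ∀ τ, deriv (deriv φ) τ + |φ τ| ^ ((1:ℝ)/2) * φ τ = 0)
    (hodd : ∀ τ, φ (-τ) = -φ τ)
    (h0 : φ 0 = 0) (h0' : 0 < deriv φ 0)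
    (hanti : ∀ τ, φ (τ + π) = -φ τ)
    (hpos : ∀ τ ∈ Set.Icc (0:ℝ) π, 0 ≤ φ τ) :
    ∃! q₀ : ℝ, q₀ ∈ Set.Ioo (0:ℝ) (π/2) ∧
      (-(∫ τ in (π - 2 * q₀)..π,
          deriv (deriv φ) τ * deriv (deriv φ) (τ + 2 * q₀)))
        = (2/π) * (deriv φ 0) ^ 2 ∧
      (∀ q ∈ Set.Ico (0:ℝ) q₀,
        (-(∫ τ in (π - 2 * q)..π,
            deriv (deriv φ) τ * deriv (deriv φ) (τ + 2 * q)))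
          < (2/π) * (deriv φ 0) ^ 2) ∧
      (∀ q ∈ Set.Ioc q₀ (π/2),
        (2/π) * (deriv φ 0) ^ 2
          < -(∫ τ in (π - 2 * q)..π,
              deriv (deriv φ) τ * deriv (deriv φ) (τ + 2 * q))) := by
  have hφ2 : ContDiff ℝ 2 φ := hφ.of_le (by norm_num)
  have hode' : ∀ τ, deriv (deriv φ) τ = -hertz (φ τ) := fun τ => by
    rw [hertz, sqrt_eq_rpow]
    linarith [hode τ]
  have hsymm : ∀ t, φ (π - t) = φ t := fun t => by
    rw [← neg_add_eq_sub, hanti, hodd, neg_neg]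
  have hconc := antitoneOn_deriv_of_nonneg hφ2 hode' hpos
  set G := fun t => hertz (φ t)
  have hG : Continuous G := continuous_hertz.comp hφ.continuous
  have hI : ∀ q, -(∫ τ in (π - 2 * q)..π, deriv (deriv φ) τ * deriv (deriv φ) (τ + 2 * q))
      = 2 * symmetricProductIntegral G q := fun q => by
    simp only [hode', neg_mul_neg]
    rw [integral_mul_comp_add_eq_symmetricProductIntegral hG (fun t => by simp only [G, hsymm])
      (fun t => by simp only [G, hanti, hertz_neg]), neg_neg]
  have hmono : StrictMonoOn (symmetricProductIntegral G) (Icc 0 (π / 2)) :=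
    strictMonoOn_symmetricProductIntegral hG
      (fun x hx => hertz_pos (pos_of_symm hsymm hconc (hφ2.of_le one_le_two) h0 h0' hx))
      fun s => monotoneOn_hertz_mul_of_symm hsymm hconc (hφ2.differentiable two_ne_zero) hpos
  simp only [hI]
  refine ((strictMono_mul_left_of_pos two_pos).comp_strictMonoOn hmono).existsUnique_crossing
    (by positivity) (continuous_const.mul (continuous_symmetricProductIntegral hG)).continuousOn
    ?_ ?_
  · rw [symmetricProductIntegral, integral_same, mul_zero]
    positivity
  · have h : 4 / π * deriv φ 0 ^ 2 ≤ 2 * symmetricProductIntegral G (π / 2) :=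
      four_div_mul_sq_deriv_le_symmetricProductIntegral hφ2 hode' hsymm pi_pos
    have hc : 0 < 2 / π * deriv φ 0 ^ 2 := by positivity
    have h4 : 4 / π * deriv φ 0 ^ 2 = 2 * (2 / π * deriv φ 0 ^ 2) := by ring
    linarith

/-- Existence and uniqueness of the critical wavenumber `q₀ ∈ (0, π/2)` at which
`I(q) = -∫_{π-2q}^{π} φ̈(τ)φ̈(τ+2q) dτ` crosses the threshold `(2/π)φ̇(0)²`
(Lemma 3 of the paper). -/
theorem critical_wavenumber
    (φ : ℝ → ℝ) (hφ : ContDiff ℝ 3 φ)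
    (hper : Function.Periodic φ (2 * π))
    (hmin : ∀ p, 0 < p → Function.Periodic φ p → 2 * π ≤ p)
    (hode : ∀ τ, deriv (deriv φ) τ + |φ τ| ^ ((1:ℝ)/2) * φ τ = 0)
    (hodd : ∀ τ, φ (-τ) = -φ τ)
    (h0 : φ 0 = 0) (h0' : 0 < deriv φ 0)
    (hanti : ∀ τ, φ (τ + π) = -φ τ)
    (hpos : ∀ τ ∈ Set.Icc (0:ℝ) π, 0 ≤ φ τ) :
    ∃! q₀ : ℝ, q₀ ∈ Set.Ioo (0:ℝ) (π/2) ∧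
      (-(∫ τ in (π - 2 * q₀)..π,
          deriv (deriv φ) τ * deriv (deriv φ) (τ + 2 * q₀)))
        = (2/π) * (deriv φ 0) ^ 2 ∧
      (∀ q ∈ Set.Ico (0:ℝ) q₀,
        (-(∫ τ in (π - 2 * q)..π,
            deriv (deriv φ) τ * deriv (deriv φ) (τ + 2 * q)))
          < (2/π) * (deriv φ 0) ^ 2) ∧
      (∀ q ∈ Set.Ioc q₀ (π/2),
        (2/π) * (deriv φ 0) ^ 2
          < -(∫ τ in (π - 2 * q)..π,
              deriv (deriv φ) τ * deriv (deriv φ) (τ + 2 * q))) :=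
  critical_wavenumber_general φ hφ hode hodd h0 h0' hanti hpos
end
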